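/- Let μ and ν be Borel probability measures on ℝ^m with finite first moments, and let d = sup { ∫ f dμ − ∫ f dν : f : ℝ^m → ℝ is 1-Lipschitz and integrable with respect to both μ and ν }. Let h : ℝ^m → ℝ be Lipschitz with constant l_h and satisfy |h(x)| ≤ 1 for all x, let g : ℝ^m → ℝ be Lipschitz with constant l_g and satisfy |g(x)| ≤ 1 for all x, and let p > 0 be a real number. Assume h·g is integrable with respect to both μ and ν. Then |(1/p) ∫ h·g dμ − (1/p) ∫ h·g dν| ≤ ((l_h + l_g)/p) · d. -/

import Mathlib

open MeasureTheory
open scoped NNReal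

/-!
Since `|h|, |g| ≤ 1`, the product `h * g` is `(l_h + l_g)`-Lipschitz, so `h * g / (l_h + l_g)` and
its negative are 1-Lipschitz test functions in the Kantorovich–Rubinstein supremum `d`; this bounds
`|∫ h g dμ - ∫ h g dν|` by `(l_h + l_g) d`. The supremum is finite because a 1-Lipschitz `f`
satisfies `|∫ f dμ - f 0| ≤ ∫ ‖x‖ dμ`.
-/

theorem LipschitzWith.mul_of_norm_le {α R : Type*} [PseudoMetricSpace α] [SeminormedRing R]
    {f g : α → R} {Kf Kg Cf Cg : ℝ≥0} (hf : LipschitzWith Kf f) (hg : LipschitzWith Kg g)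
    (hfC : ∀ x, ‖f x‖ ≤ Cf) (hgC : ∀ x, ‖g x‖ ≤ Cg) :
    LipschitzWith (Cf * Kg + Kf * Cg) fun x => f x * g x := by
  refine LipschitzWith.of_dist_le_mul fun x y => ?_
  have hfxy := hf.dist_le_mul x y
  have hgxy := hg.dist_le_mul x y
  rw [dist_eq_norm] at hfxy hgxy ⊢
  calc ‖f x * g x - f y * g y‖ = ‖f x * (g x - g y) + (f x - f y) * g y‖ := by noncomm_ring
    _ ≤ ‖f x‖ * ‖g x - g y‖ + ‖f x - f y‖ * ‖g y‖ :=
        (norm_add_le _ _).trans (add_le_add (norm_mul_le _ _) (norm_mul_le _ _))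
    _ ≤ Cf * (Kg * dist x y) + Kf * dist x y * Cg := by gcongr <;> simp_all
    _ = ↑(Cf * Kg + Kf * Cg) * dist x y := by push_cast; ring

section KantorovichRubinstein

variable {X : Type*} [PseudoMetricSpace X] [MeasurableSpace X] {μ ν : Measure X}

/-- `sSup (kantorovichRubinsteinSet μ ν)` is the Kantorovich–Rubinstein dual form of `W₁(μ, ν)`. -/
def kantorovichRubinsteinSet (μ ν : Measure X) : Set ℝ :=
  {r | ∃ f : X → ℝ, LipschitzWith 1 f ∧ Integrable f μ ∧ Integrable f ν ∧
    r = (∫ x, f x ∂μ) - ∫ x, f x ∂ν}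

theorem LipschitzWith.abs_integral_sub_le [IsProbabilityMeasure μ] {f : X → ℝ} {K : ℝ≥0}
    (hf : LipschitzWith K f) (hfμ : Integrable f μ) (x₀ : X)
    (hμ : Integrable (fun x => dist x x₀) μ) :
    |(∫ x, f x ∂μ) - f x₀| ≤ K * ∫ x, dist x x₀ ∂μ := by
  calc |(∫ x, f x ∂μ) - f x₀| = ‖∫ x, (f x - f x₀) ∂μ‖ := by
        rw [integral_sub hfμ (integrable_const _), integral_const, probReal_univ, one_smul,
          Real.norm_eq_abs]
    _ ≤ ∫ x, K * dist x x₀ ∂μ :=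
        norm_integral_le_of_norm_le (hμ.const_mul _) (ae_of_all _ fun x => hf.dist_le_mul x x₀)
    _ = K * ∫ x, dist x x₀ ∂μ := integral_const_mul _ _

theorem bddAbove_kantorovichRubinsteinSet [IsProbabilityMeasure μ] [IsProbabilityMeasure ν]
    (x₀ : X) (hμ : Integrable (fun x => dist x x₀) μ) (hν : Integrable (fun x => dist x x₀) ν) :
    BddAbove (kantorovichRubinsteinSet μ ν) := by
  refine ⟨(∫ x, dist x x₀ ∂μ) + ∫ x, dist x x₀ ∂ν, ?_⟩
  rintro _ ⟨f, hf, hfμ, hfν, rfl⟩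
  have hfμ' := abs_le.1 (hf.abs_integral_sub_le hfμ x₀ hμ)
  have hfν' := abs_le.1 (hf.abs_integral_sub_le hfν x₀ hν)
  simp only [NNReal.coe_one, one_mul] at hfμ' hfν'
  linarith [hfμ'.2, hfν'.1]

theorem LipschitzWith.integral_sub_integral_le_mul_sSup [IsProbabilityMeasure μ]
    [IsProbabilityMeasure ν] (hS : BddAbove (kantorovichRubinsteinSet μ ν)) {f : X → ℝ}
    {K : ℝ≥0} (hf : LipschitzWith K f) (hfμ : Integrable f μ) (hfν : Integrable f ν) :
    (∫ x, f x ∂μ) - ∫ x, f x ∂ν ≤ K * sSup (kantorovichRubinsteinSet μ ν) := by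
  rcases eq_or_ne K 0 with rfl | hK
  · obtain ⟨x₀⟩ := nonempty_of_isProbabilityMeasure μ
    have hconst : ∀ x, f x = f x₀ := fun x => (LipschitzWith.zero_iff f).1 hf x x₀
    rw [integral_congr_ae (ae_of_all μ hconst), integral_congr_ae (ae_of_all ν hconst)]
    simp
  · have hKpos : (0 : ℝ) < K := by positivity
    have hf₁ : LipschitzWith 1 fun x => (K : ℝ)⁻¹ * f x := by
      simpa [hK, Function.comp_def] using (lipschitzWith_smul (K : ℝ)⁻¹).comp hf
    have hmem : (K : ℝ)⁻¹ * ((∫ x, f x ∂μ) - ∫ x, f x ∂ν) ∈ kantorovichRubinsteinSet μ ν :=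
      ⟨_, hf₁, hfμ.const_mul _, hfν.const_mul _, by
        rw [integral_const_mul, integral_const_mul, mul_sub]⟩
    exact (inv_mul_le_iff₀ hKpos).1 (le_csSup hS hmem)

theorem LipschitzWith.abs_integral_sub_integral_le_mul_sSup [IsProbabilityMeasure μ]
    [IsProbabilityMeasure ν] (hS : BddAbove (kantorovichRubinsteinSet μ ν)) {f : X → ℝ}
    {K : ℝ≥0} (hf : LipschitzWith K f) (hfμ : Integrable f μ) (hfν : Integrable f ν) :
    |(∫ x, f x ∂μ) - ∫ x, f x ∂ν| ≤ K * sSup (kantorovichRubinsteinSet μ ν) := by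
  refine abs_sub_le_iff.2 ⟨hf.integral_sub_integral_le_mul_sSup hS hfμ hfν, ?_⟩
  have := hf.neg.integral_sub_integral_le_mul_sSup hS hfμ.neg hfν.neg
  simp only [Pi.neg_apply, integral_neg] at this
  linarith

end KantorovichRubinstein

/-- Kantorovich–Rubinstein bound on the equal-opportunity gap: if `d` is the
dual formulation of the 1-Wasserstein distance between the group feature
distributions `μ` and `ν`, `h` is an `l_h`-Lipschitz decision model bounded by
1, `g` is an `l_g`-Lipschitz labeling model bounded by 1, and `p > 0` is the
base rate, then `|(1/p) ∫ h·g dμ − (1/p) ∫ h·g dν| ≤ ((l_h + l_g)/p) · d`. -/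
theorem eo_bounded_by_wasserstein {m : ℕ}
    (μ ν : Measure (Fin m → ℝ)) [IsProbabilityMeasure μ] [IsProbabilityMeasure ν]
    (hμmom : Integrable (fun x => ‖x‖) μ) (hνmom : Integrable (fun x => ‖x‖) ν)
    (d : ℝ)
    (hd : d = sSup {r : ℝ | ∃ f : (Fin m → ℝ) → ℝ, LipschitzWith 1 f ∧
      Integrable f μ ∧ Integrable f ν ∧ r = (∫ x, f x ∂μ) - ∫ x, f x ∂ν})
    (h g : (Fin m → ℝ) → ℝ) (lh lg : ℝ≥0)
    (hh : LipschitzWith lh h) (hg : LipschitzWith lg g)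
    (hhb : ∀ x, |h x| ≤ 1) (hgb : ∀ x, |g x| ≤ 1)
    (p : ℝ) (hp : 0 < p)
    (hhgμ : Integrable (fun x => h x * g x) μ)
    (hhgν : Integrable (fun x => h x * g x) ν) :
    |(1 / p) * (∫ x, h x * g x ∂μ) - (1 / p) * ∫ x, h x * g x ∂ν| ≤
      (((lh : ℝ) + (lg : ℝ)) / p) * d := by
  replace hd : d = sSup (kantorovichRubinsteinSet μ ν) := hd
  have hS : BddAbove (kantorovichRubinsteinSet μ ν) :=
    bddAbove_kantorovichRubinsteinSet 0 (by simpa using hμmom) (by simpa using hνmom)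
  have hhg : LipschitzWith (lh + lg) fun x => h x * g x := by
    simpa [add_comm] using hh.mul_of_norm_le hg (Cf := 1) (Cg := 1) (by simpa using hhb)
      (by simpa using hgb)
  have hgap : |(∫ x, h x * g x ∂μ) - ∫ x, h x * g x ∂ν| ≤ ((lh : ℝ) + lg) * d := by
    simpa [hd] using hhg.abs_integral_sub_integral_le_mul_sSup hS hhgμ hhgν
  calc |(1 / p) * (∫ x, h x * g x ∂μ) - (1 / p) * ∫ x, h x * g x ∂ν|
      = |(∫ x, h x * g x ∂μ) - ∫ x, h x * g x ∂ν| / p := by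
        rw [← mul_sub, abs_mul, abs_of_pos (one_div_pos.2 hp), one_div_mul_eq_div]
    _ ≤ ((lh : ℝ) + lg) * d / p := div_le_div_of_nonneg_right hgap hp.le
    _ = ((lh : ℝ) + lg) / p * d := div_mul_eq_mul_div _ _ _ |>.symm
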